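/- Let I be a good ideal in K[x_1,…,x_n] and let a_1,…,a_n be nonnegative integers, with l = a_1+⋯+a_n+1. Then I_{a_1,…,a_n} = I^l : ⟨μ_1^{a_1}⋯μ_n^{a_n}⟩ (the ideal quotient of I^l by the principal ideal generated by μ_1^{a_1}⋯μ_n^{a_n}). -/

import Mathlib

open MvPolynomial

namespace GasanovaRR

/-- The monomial `x^α` in `K[x_1,…,x_n]`. -/
noncomputable def mono (K : Type*) [Field K] {n : ℕ} (α : Fin n → ℕ) :
    MvPolynomial (Fin n) K :=
  MvPolynomial.monomial (Finsupp.equivFunOnFinite.symm α) 1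

/-- `I` is a monomial ideal: it is generated by a set of monomials. -/
def IsMonomialIdeal {K : Type*} [Field K] {n : ℕ}
    (I : Ideal (MvPolynomial (Fin n) K)) : Prop :=
  ∃ A : Set (Fin n → ℕ), I = Ideal.span (mono K '' A)

/-- `x^α` is a minimal monomial generator of `I`, i.e. `x^α ∈ G(I)`:
`x^α ∈ I` and no monomial in `I` strictly divides it. -/
def IsMinGen {K : Type*} [Field K] {n : ℕ}
    (I : Ideal (MvPolynomial (Fin n) K)) (α : Fin n → ℕ) : Prop :=
  mono K α ∈ I ∧ ∀ β : Fin n → ℕ, mono K β ∈ I → β ≤ α → β = α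

/-- The point `α` lies in the box `B_{a_1,…,a_n}` (for box sizes `d_1,…,d_n`). -/
def InBox {n : ℕ} (d a α : Fin n → ℕ) : Prop :=
  ∀ i, a i * d i ≤ α i ∧ α i ≤ (a i + 1) * d i

/-- `I` is a good ideal (w.r.t. box sizes `d`): for every `l ≥ 1`, every minimal
generator of `I^l` lies in a box whose coordinate sum is `l - 1`. -/
def IsGood {K : Type*} [Field K] {n : ℕ}
    (I : Ideal (MvPolynomial (Fin n) K)) (d : Fin n → ℕ) : Prop :=
  ∀ l : ℕ, 1 ≤ l → ∀ α : Fin n → ℕ, IsMinGen (I ^ l) α →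
    ∃ a : Fin n → ℕ, InBox d a α ∧ ∑ i, a i = l - 1

/-- `I` is an `𝔪`-primary monomial ideal whose minimal generating set contains
`μ_i = x_i^{d_i}` with `d_i > 0` for each `i`. -/
def MPrimaryWithCorners {K : Type*} [Field K] {n : ℕ}
    (I : Ideal (MvPolynomial (Fin n) K)) (d : Fin n → ℕ) : Prop :=
  IsMonomialIdeal I ∧ I ≠ ⊤ ∧ (∀ i, 0 < d i) ∧ ∀ i, IsMinGen I (Pi.single i (d i))

/-- The ideal `I_{a_1,…,a_n}` associated to the box `B_{a_1,…,a_n}`, generated by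
`m / (μ_1^{a_1}⋯μ_n^{a_n})` for `m ∈ B_{a_1,…,a_n} ∩ G(I^l)`, `l = a_1+⋯+a_n+1`. -/
noncomputable def boxIdeal {K : Type*} [Field K] {n : ℕ}
    (I : Ideal (MvPolynomial (Fin n) K)) (d a : Fin n → ℕ) :
    Ideal (MvPolynomial (Fin n) K) :=
  Ideal.span ((fun α => mono K (α - fun i => a i * d i)) ''
    {α | InBox d a α ∧ IsMinGen (I ^ (∑ i, a i + 1)) α})

/-- The Ratliff–Rush closure `Ĩ = ⋃_{k ≥ 0} (I^{k+1} : I^k)`. -/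
noncomputable def ratliffRush {K : Type*} [Field K] {n : ℕ}
    (I : Ideal (MvPolynomial (Fin n) K)) : Ideal (MvPolynomial (Fin n) K) :=
  ⨆ k : ℕ, (I ^ (k + 1)).colon ((I ^ k : Ideal (MvPolynomial (Fin n) K)) : Set (MvPolynomial (Fin n) K))

/-- The cone in `ℕ^n` with set `S` of fixed coordinates and vertex `v`. -/
def Cone {n : ℕ} (S : Set (Fin n)) (v : Fin n → ℕ) : Set (Fin n → ℕ) :=
  {b | (∀ i ∈ S, b i = v i) ∧ ∀ i ∉ S, v i ≤ b i}

/-- `I` is a very good ideal: it is good and `I_{a_1,…,a_n} = I` for all boxes. -/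
def IsVeryGood {K : Type*} [Field K] {n : ℕ}
    (I : Ideal (MvPolynomial (Fin n) K)) (d : Fin n → ℕ) : Prop :=
  IsGood I d ∧ ∀ a : Fin n → ℕ, boxIdeal I d a = I

/-!
The proof rests on the rational valuation `v(x^β) = ∑ βᵢ / dᵢ`. For a good ideal it is at least
`l` on `I^l`: a minimal generator of `I^(N l)` lies in a box of index sum `N l - 1`, so `v ≥ l - 1/N`
for every `N`.

Given `x^m ∈ I^l` with `m ≥ a·d`, take `w` minimal among the exponents of `I^l` lying between
`a·d` and `m`. Each corner `(a + eⱼ)·d` lies in `I^l`, so minimality keeps `w` inside the box `B_a`.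
A minimal generator `u ≤ w` of `I^l` that is not above `a·d` lies in a box of the same index sum,
hence reaches the upper face `(aⱼ + 1)·dⱼ` in some coordinate `j`; this forces `w = (a + eⱼ)·d`,
and then `v(u) < v(w) = l` contradicts the valuation bound. So `w` is a minimal generator of `I^l`
in `B_a`, and `x^(w - a·d)` is a generator of `I_a` dividing `x^(m - a·d)`.
-/

section Development

variable {K : Type*} [Field K] {n : ℕ}

theorem mono_eq_prod (α : Fin n → ℕ) : mono K α = ∏ i, X i ^ α i := by
  rw [mono, monomial_eq, C_1, one_mul, Finsupp.prod_fintype _ _ fun _ => pow_zero _]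
  rfl

theorem mono_add (α β : Fin n → ℕ) : mono K (α + β) = mono K α * mono K β := by
  simp only [mono_eq_prod, Pi.add_apply, pow_add, Finset.prod_mul_distrib]

theorem mono_nsmul (N : ℕ) (α : Fin n → ℕ) : mono K (N • α) = mono K α ^ N := by
  simp only [mono_eq_prod, Pi.smul_apply, smul_eq_mul, pow_mul', Finset.prod_pow]

theorem mono_single (i : Fin n) (e : ℕ) : mono K (Pi.single i e) = X i ^ e := by
  simp [mono_eq_prod, Pi.single_apply]

theorem mono_mem_of_le {J : Ideal (MvPolynomial (Fin n) K)} {α β : Fin n → ℕ}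
    (h : mono K α ∈ J) (hle : α ≤ β) : mono K β ∈ J := by
  rw [← add_tsub_cancel_of_le hle, mono_add]
  exact J.mul_mem_right _ h

theorem mono_mul_mem_pow {I : Ideal (MvPolynomial (Fin n) K)} {d : Fin n → ℕ}
    (hd : ∀ i, mono K (Pi.single i (d i)) ∈ I) (c : Fin n → ℕ) :
    mono K (c * d) ∈ I ^ ∑ i, c i := by
  have h : mono K (c * d) = ∏ i, mono K (Pi.single i (d i)) ^ c i := by
    simp only [mono_single, ← pow_mul, mul_comm]
    exact mono_eq_prod _
  rw [h, ← Finset.prod_pow_eq_pow_sum]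
  exact Ideal.prod_mem_prod fun i _ => Ideal.pow_mem_pow (hd i) _

theorem mem_span_mono_image_iff {S : Set (Fin n → ℕ)} {f : MvPolynomial (Fin n) K} :
    f ∈ Ideal.span (mono K '' S) ↔ ∀ ξ ∈ f.support, ∃ γ ∈ S, γ ≤ ⇑ξ := by
  rw [show mono K '' S = (monomial · 1) '' (Finsupp.equivFunOnFinite.symm '' S) by
    rw [Set.image_image]; rfl, mem_ideal_span_monomial_image]
  simp only [Set.exists_mem_image, Finsupp.le_def, Pi.le_def,
    Finsupp.coe_equivFunOnFinite_symm]

namespace IsMonomialIdeal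

variable {I J : Ideal (MvPolynomial (Fin n) K)}

theorem mono_mem_of_mem_support (hJ : IsMonomialIdeal J) {f : MvPolynomial (Fin n) K}
    (hf : f ∈ J) {ξ : Fin n →₀ ℕ} (hξ : ξ ∈ f.support) : mono K ξ ∈ J := by
  obtain ⟨S, rfl⟩ := hJ
  obtain ⟨γ, hγ, hle⟩ := mem_span_mono_image_iff.mp hf ξ hξ
  exact mono_mem_of_le (Ideal.subset_span ⟨γ, hγ, rfl⟩) hle

theorem mono_add_mem_of_mul_mem (hJ : IsMonomialIdeal J) {f : MvPolynomial (Fin n) K}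
    {β : Fin n → ℕ} (hf : f * mono K β ∈ J) {ξ : Fin n →₀ ℕ} (hξ : ξ ∈ f.support) :
    mono K (⇑ξ + β) ∈ J := by
  have hsupp : ξ + Finsupp.equivFunOnFinite.symm β ∈ (f * mono K β).support := by
    rwa [mono, mem_support_iff, coeff_mul_monomial, mul_one, ← mem_support_iff]
  simpa using hJ.mono_mem_of_mem_support hf hsupp

open scoped Pointwise in
theorem mul (hI : IsMonomialIdeal I) (hJ : IsMonomialIdeal J) : IsMonomialIdeal (I * J) := by
  obtain ⟨S, rfl⟩ := hI
  obtain ⟨T, rfl⟩ := hJ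
  refine ⟨S + T, ?_⟩
  rw [Ideal.span_mul_span', ← Set.image2_mul, ← Set.image2_add, Set.image_image2,
    Set.image2_image_left, Set.image2_image_right]
  simp only [mono_add]

theorem pow (hI : IsMonomialIdeal I) (l : ℕ) : IsMonomialIdeal (I ^ l) := by
  induction l with
  | zero => exact ⟨{0}, by simp [mono_eq_prod]⟩
  | succ l ih => exact pow_succ I l ▸ ih.mul hI

end IsMonomialIdeal

section Weight

def weight (d β : Fin n → ℕ) : ℚ := ∑ i, (β i : ℚ) / d i

variable {d : Fin n → ℕ}

theorem weight_strictMono (hd : ∀ i, 0 < d i) : StrictMono (weight d) := by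
  intro u w huw
  obtain ⟨hle, i, hlt⟩ := Pi.lt_def.mp huw
  have hdi : (0 : ℚ) < d i := by exact_mod_cast hd i
  refine Finset.sum_lt_sum (fun j _ => ?_) ⟨i, Finset.mem_univ i, ?_⟩
  · gcongr
    exact hle j
  · gcongr

theorem weight_mul (hd : ∀ i, 0 < d i) (c : Fin n → ℕ) : weight d (c * d) = ∑ i, (c i : ℚ) := by
  refine Finset.sum_congr rfl fun i _ => ?_
  rw [Pi.mul_apply, Nat.cast_mul, mul_div_cancel_right₀ _ (by exact_mod_cast (hd i).ne')]

theorem weight_nsmul (N : ℕ) (β : Fin n → ℕ) : weight d (N • β) = N * weight d β := by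
  simp only [weight, Finset.mul_sum, Pi.smul_apply, smul_eq_mul, Nat.cast_mul, mul_div_assoc]

end Weight

theorem isMinGen_iff_minimal {J : Ideal (MvPolynomial (Fin n) K)} {α : Fin n → ℕ} :
    IsMinGen J α ↔ Minimal (fun β => mono K β ∈ J) α :=
  and_congr_right fun _ => forall₂_congr fun _ _ =>
    ⟨fun h hle => (h hle).ge, fun h hle => le_antisymm hle (h hle)⟩

theorem exists_isMinGen_le {J : Ideal (MvPolynomial (Fin n) K)} {β : Fin n → ℕ}
    (h : mono K β ∈ J) : ∃ α ≤ β, IsMinGen J α := by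
  simpa only [isMinGen_iff_minimal] using exists_minimal_le_of_wellFoundedLT _ β h

theorem exists_add_one_mul_le_of_inBox {a c d u : Fin n → ℕ} (hu : InBox d c u)
    (hsum : ∑ i, c i = ∑ i, a i) (hau : ¬ a * d ≤ u) : ∃ j, (a j + 1) * d j ≤ u j := by
  obtain ⟨i, hi⟩ : ∃ i, u i < a i * d i := by simpa [Pi.le_def] using hau
  have hci : c i < a i := Nat.lt_of_mul_lt_mul_right ((hu i).1.trans_lt hi)
  obtain ⟨j, hj⟩ : ∃ j, a j < c j := by
    by_contra! h
    exact (Finset.sum_lt_sum (fun j _ => h j) ⟨i, Finset.mem_univ i, hci⟩).ne hsum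
  exact ⟨j, (Nat.mul_le_mul_right _ hj).trans (hu j).1⟩

theorem sum_add_single_one (a : Fin n → ℕ) (j : Fin n) :
    ∑ i, (a + Pi.single j 1 : Fin n → ℕ) i = ∑ i, a i + 1 := by
  simp [Finset.sum_add_distrib]

theorem add_single_one_mul_le_iff {a d w : Fin n → ℕ} {j : Fin n} :
    (a + Pi.single j 1) * d ≤ w ↔ a * d ≤ w ∧ (a j + 1) * d j ≤ w j := by
  refine ⟨fun h => ⟨fun i => le_trans ?_ (h i), by simpa using h j⟩, fun ⟨h, hj⟩ i => ?_⟩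
  · exact Nat.mul_le_mul_right _ (Nat.le_add_right _ _)
  · rcases eq_or_ne i j with rfl | hij
    · simpa using hj
    · simpa [hij] using h i

namespace IsGood

variable {I : Ideal (MvPolynomial (Fin n) K)} {d : Fin n → ℕ}

theorem sub_one_le_weight (hgood : IsGood I d) (hd : ∀ i, 0 < d i) {l : ℕ} (hl : 1 ≤ l)
    {β : Fin n → ℕ} (hβ : mono K β ∈ I ^ l) : (l : ℚ) - 1 ≤ weight d β := by
  obtain ⟨α, hαβ, hα⟩ := exists_isMinGen_le hβ
  obtain ⟨c, hbox, hsum⟩ := hgood l hl α hα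
  calc (l : ℚ) - 1 = ∑ i, (c i : ℚ) := by rw [← Nat.cast_sum, hsum, Nat.cast_sub hl, Nat.cast_one]
    _ = weight d (c * d) := (weight_mul hd c).symm
    _ ≤ weight d β :=
      (weight_strictMono hd).monotone ((show c * d ≤ α from fun i => (hbox i).1).trans hαβ)

theorem le_weight (hgood : IsGood I d) (hd : ∀ i, 0 < d i) {l : ℕ} {β : Fin n → ℕ}
    (hβ : mono K β ∈ I ^ l) : (l : ℚ) ≤ weight d β := by
  rcases Nat.eq_zero_or_pos l with rfl | hl
  · simp only [Nat.cast_zero, weight]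
    positivity
  refine le_of_forall_pos_lt_add fun ε hε => ?_
  obtain ⟨N, hN⟩ := exists_nat_one_div_lt hε
  have hpow : mono K ((N + 1) • β) ∈ I ^ ((N + 1) * l) := by
    rw [mono_nsmul, mul_comm, pow_mul]
    exact Ideal.pow_mem_pow hβ _
  have h := hgood.sub_one_le_weight hd (Nat.one_le_iff_ne_zero.mpr (by positivity)) hpow
  push_cast [weight_nsmul] at h
  have hN' : (0 : ℚ) < N + 1 := by positivity
  have : (l : ℚ) - weight d β ≤ 1 / (N + 1) := by
    rw [le_div_iff₀ hN']
    linarith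
  linarith

theorem eq_of_mem_pow_of_le_mul (hgood : IsGood I d) (hd : ∀ i, 0 < d i) {c u : Fin n → ℕ}
    (hu : mono K u ∈ I ^ ∑ i, c i) (hle : u ≤ c * d) : u = c * d := by
  refine hle.eq_of_not_lt fun hlt => ?_
  have := (weight_strictMono hd) hlt
  rw [weight_mul hd] at this
  exact_mod_cast this.not_ge (by exact_mod_cast hgood.le_weight hd hu)

theorem exists_isMinGen_inBox_le
    (hgood : IsGood I d) (hd : ∀ i, 0 < d i) (hc : ∀ i, mono K (Pi.single i (d i)) ∈ I)
    (a : Fin n → ℕ) {m : Fin n → ℕ} (hm : mono K m ∈ I ^ (∑ i, a i + 1)) (ham : a * d ≤ m) :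
    ∃ w ≤ m, InBox d a w ∧ IsMinGen (I ^ (∑ i, a i + 1)) w := by
  set l := ∑ i, a i + 1
  have hcorner (j : Fin n) : mono K ((a + Pi.single j 1) * d) ∈ I ^ l := by
    have h := mono_mul_mem_pow hc (a + Pi.single j 1)
    rwa [sum_add_single_one] at h
  obtain ⟨w, hwm, hw⟩ := exists_minimal_le_of_wellFoundedLT
    (fun v => mono K v ∈ I ^ l ∧ a * d ≤ v) m ⟨hm, ham⟩
  have eq_corner {j : Fin n} (hj : (a + Pi.single j 1) * d ≤ w) :
      w = (a + Pi.single j 1) * d :=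
    hw.eq_of_ge ⟨hcorner j, (add_single_one_mul_le_iff.mp le_rfl).1⟩ hj
  have hbox : InBox d a w := fun j => by
    refine ⟨hw.1.2 j, not_lt.mp fun hlt => hlt.ne' ?_⟩
    simpa using congrFun (eq_corner (add_single_one_mul_le_iff.mpr ⟨hw.1.2, hlt.le⟩)) j
  obtain ⟨u, huw, hu⟩ := exists_isMinGen_le hw.1.1
  have hau : a * d ≤ u := by
    by_contra hau
    obtain ⟨c, hc_box, hc_sum⟩ := hgood l (Nat.le_add_left 1 _) u hu
    obtain ⟨j, hj⟩ := exists_add_one_mul_le_of_inBox hc_box hc_sum hau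
    have hwj := eq_corner (add_single_one_mul_le_iff.mpr ⟨hw.1.2, hj.trans (huw j)⟩)
    have hu_mem : mono K u ∈ I ^ ∑ i, (a + Pi.single j 1 : Fin n → ℕ) i := by
      rw [sum_add_single_one]
      exact hu.1
    have huj := hgood.eq_of_mem_pow_of_le_mul hd hu_mem (huw.trans_eq hwj)
    exact hau (hw.1.2.trans_eq (hwj.trans huj.symm))
  exact ⟨w, hwm, hbox, (hw.eq_of_ge ⟨hu.1, hau⟩ huw).symm ▸ hu⟩

end IsGood

end Development

/-- Proposition 4.4: for a good ideal `I`,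
`I_{a_1,…,a_n} = I^l : ⟨μ_1^{a_1}⋯μ_n^{a_n}⟩` where `l = a_1 + ⋯ + a_n + 1`. -/
theorem boxIdeal_eq_colon {K : Type*} [Field K] {n : ℕ}
    (I : Ideal (MvPolynomial (Fin n) K)) (d : Fin n → ℕ)
    (hI : MPrimaryWithCorners I d) (hgood : IsGood I d) (a : Fin n → ℕ) :
    boxIdeal I d a =
      (I ^ (∑ i, a i + 1)).colon (Ideal.span {mono K (fun i => a i * d i)}) := by
  obtain ⟨hmon, -, hd, hc⟩ := hI
  refine le_antisymm ?_ fun f hf => ?_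
  · rw [boxIdeal, Ideal.span_le]
    rintro _ ⟨α, ⟨hbox, hα⟩, rfl⟩
    dsimp only
    rw [SetLike.mem_coe, Ideal.mem_colon_span_singleton, ← mono_add,
      tsub_add_cancel_of_le fun i => (hbox i).1]
    exact hα.1
  · rw [Ideal.mem_colon_span_singleton] at hf
    rw [boxIdeal, ← Set.image_image (mono K) (· - fun i => a i * d i), mem_span_mono_image_iff]
    intro ξ hξ
    obtain ⟨w, hwm, hbox, hw⟩ := hgood.exists_isMinGen_inBox_le hd (fun i => (hc i).1) a
      ((hmon.pow _).mono_add_mem_of_mul_mem hf hξ) le_add_self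
    exact ⟨w - fun i => a i * d i, ⟨w, ⟨hbox, hw⟩, rfl⟩, tsub_le_iff_right.mpr hwm⟩

end GasanovaRR
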